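/- Let B₁, B₂ be random variables on a space B with d_TV(B₁,B₂) ≤ δ, and let A: B → M be a (possibly randomized) map into a finite set M, applied with the same randomness mechanism to both. Then |I(A(B₁);B₁) − I(A(B₂);B₂)| ≤ 4δ·log(|M|/δ). -/

import Mathlib

open scoped BigOperators

/-- `p` is a probability mass function. -/
def IsPMF {M : Type*} [Fintype M] (p : M → ℝ) : Prop :=
  (∀ y, 0 ≤ p y) ∧ ∑ y, p y = 1

/-- Total variation distance between two pmfs on a finite set. -/
noncomputable def tvDist {M : Type*} [Fintype M] (p q : M → ℝ) : ℝ :=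
  (∑ y, |p y - q y|) / 2

/-- Mutual information of a joint pmf on a product of finite sets (natural log). -/
noncomputable def miPMF {A M : Type*} [Fintype A] [Fintype M] (j : A × M → ℝ) : ℝ :=
  ∑ a, ∑ m, j (a, m) *
    Real.log (j (a, m) / ((∑ m', j (a, m')) * (∑ a', j (a', m))))

/-!
The mutual information splits as `I(A(B); B) = H(A(B)) - ∑ b, β b * H(κ b)`. Passing through the
kernel does not increase total variation, so the two output laws are `δ`-close. Summing the
continuity estimate `|η x - η y| ≤ η |x - y| + |x - y|` for `η = negMulLog` and applying Jensen
bounds the change of the output entropy by `2δ (log |M| + 1) + η (2δ)`. The conditional entropy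
is the expectation of a function with values in `[0, log |M|]`, so it moves by at most
`δ log |M|`. For `|M| ≥ 2` the two bounds add up to at most `4δ log (|M| / δ)`; for `|M| ≤ 1`
all entropies vanish.
-/

open Real Finset

namespace Real

lemma mul_sub_log_le_sub {x y : ℝ} (hx : 0 ≤ x) (hy : 0 < y) :
    x * (log y - log x) ≤ y - x := by
  obtain rfl | hx := hx.eq_or_lt
  · simpa using hy.le
  have h := log_le_sub_one_of_pos (div_pos hy hx)
  rw [log_div hy.ne' hx.ne'] at h
  calc x * (log y - log x) ≤ x * (y / x - 1) := mul_le_mul_of_nonneg_left h hx.le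
    _ = y - x := by field_simp

lemma mul_log_le_mul_log_of_le {x y : ℝ} (hx : 0 ≤ x) (hxy : x ≤ y) :
    x * log x ≤ x * log y := by
  obtain rfl | hx := hx.eq_or_lt
  · simp
  exact mul_le_mul_of_nonneg_left (log_le_log hx hxy) hx.le

/-- The tangent-line inequality for the concave function `negMulLog` at `y`. -/
lemma negMulLog_sub_negMulLog_le {x y : ℝ} (hx : 0 ≤ x) (hxy : x ≤ y) :
    negMulLog x - negMulLog y ≤ (y - x) * (log y + 1) := by
  obtain rfl | hy := (hx.trans hxy).eq_or_lt
  · simp [le_antisymm hxy hx]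
  have := mul_sub_log_le_sub hx hy
  simp only [negMulLog]
  linarith

lemma negMulLog_add_le {x y : ℝ} (hx : 0 ≤ x) (hy : 0 ≤ y) :
    negMulLog (x + y) ≤ negMulLog x + negMulLog y := by
  have hx' := mul_log_le_mul_log_of_le hx (le_add_of_nonneg_right hy)
  have hy' := mul_log_le_mul_log_of_le hy (le_add_of_nonneg_left hx)
  simp only [negMulLog]
  linarith

lemma abs_negMulLog_sub_le {x y : ℝ} (hx : 0 ≤ x) (hx1 : x ≤ 1) (hy : 0 ≤ y) (hy1 : y ≤ 1) :
    |negMulLog x - negMulLog y| ≤ negMulLog |x - y| + |x - y| := by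
  wlog hxy : x ≤ y generalizing x y
  · rw [abs_sub_comm, abs_sub_comm x]
    exact this hy hy1 hx hx1 (le_of_not_ge hxy)
  rw [abs_sub_comm x, abs_of_nonneg (sub_nonneg.2 hxy)]
  have hsub := negMulLog_add_le hx (sub_nonneg.2 hxy)
  rw [add_sub_cancel] at hsub
  have htan := negMulLog_sub_negMulLog_le hx hxy
  have hlog : (y - x) * log y ≤ 0 :=
    mul_nonpos_of_nonneg_of_nonpos (sub_nonneg.2 hxy) (log_nonpos (hx.trans hxy) hy1)
  have hη := negMulLog_nonneg (sub_nonneg.2 hxy) (by linarith)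
  rw [abs_le]
  constructor <;> linarith

lemma monotoneOn_mul_add_negMulLog (L : ℝ) :
    MonotoneOn (fun s => s * (L + 1) + negMulLog s) (Set.Icc 0 (exp L)) := by
  intro x ⟨hx, _⟩ y ⟨_, hyL⟩ hxy
  obtain rfl | hy := (hx.trans hxy).eq_or_lt
  · simp [le_antisymm hxy hx]
  have htan := negMulLog_sub_negMulLog_le hx hxy
  have hlog : log y ≤ L := (log_le_iff_le_exp hy).2 hyL
  dsimp only
  nlinarith

/-- Jensen's inequality for `negMulLog` against the uniform distribution. -/
lemma sum_negMulLog_le {ι : Type*} [Fintype ι] (ε : ι → ℝ) (hε : ∀ i, 0 ≤ ε i) :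
    ∑ i, negMulLog (ε i) ≤ (∑ i, ε i) * log (Fintype.card ι) + negMulLog (∑ i, ε i) := by
  cases isEmpty_or_nonempty ι
  · simp
  set n : ℝ := (Fintype.card ι : ℝ)
  have hn : 0 < n := by positivity
  have hj := concaveOn_negMulLog.le_map_sum (t := univ) (w := fun _ => n⁻¹) (p := ε)
    (fun _ _ => by positivity) (by simp [n]) (fun i _ => hε i)
  simp only [smul_eq_mul, ← mul_sum, mul_comm n⁻¹ (∑ i, ε i), negMulLog_mul] at hj
  have hinv : negMulLog n⁻¹ = n⁻¹ * log n := by simp [negMulLog]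
  rw [hinv] at hj
  have := mul_le_mul_of_nonneg_left hj hn.le
  field_simp at this
  linarith

end Real

section Entropy

variable {M : Type*} [Fintype M]

lemma IsPMF.le_one {p : M → ℝ} (hp : IsPMF p) (m : M) : p m ≤ 1 :=
  hp.2 ▸ single_le_sum (fun m _ => hp.1 m) (mem_univ m)

lemma tvDist_nonneg (p q : M → ℝ) : 0 ≤ tvDist p q :=
  div_nonneg (sum_nonneg fun _ _ => abs_nonneg _) zero_le_two

noncomputable def entropy (p : M → ℝ) : ℝ :=
  ∑ m, negMulLog (p m)

lemma entropy_nonneg {p : M → ℝ} (hp : IsPMF p) : 0 ≤ entropy p :=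
  sum_nonneg fun m _ => negMulLog_nonneg (hp.1 m) (hp.le_one m)

lemma entropy_le_log_card {p : M → ℝ} (hp : IsPMF p) : entropy p ≤ log (Fintype.card M) := by
  simpa [entropy, hp.2] using sum_negMulLog_le p hp.1

lemma entropy_eq_zero_of_card_le_one {p : M → ℝ} (hp : IsPMF p) (hM : Fintype.card M ≤ 1) :
    entropy p = 0 := by
  have hlog : log (Fintype.card M) = 0 := by
    rcases Nat.le_one_iff_eq_zero_or_eq_one.1 hM with h | h <;> simp [h]
  exact le_antisymm (hlog ▸ entropy_le_log_card hp) (entropy_nonneg hp)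

lemma abs_entropy_sub_le {p q : M → ℝ} (hp : IsPMF p) (hq : IsPMF q) :
    |entropy p - entropy q|
      ≤ 2 * tvDist p q * (log (Fintype.card M) + 1) + negMulLog (2 * tvDist p q) := by
  have hl1 : 2 * tvDist p q = ∑ m, |p m - q m| := by simp only [tvDist]; ring
  have hterm : |entropy p - entropy q| ≤ ∑ m, (negMulLog |p m - q m| + |p m - q m|) := by
    rw [entropy, entropy, ← sum_sub_distrib]
    exact (abs_sum_le_sum_abs _ _).trans <| sum_le_sum fun m _ =>
      abs_negMulLog_sub_le (hp.1 m) (hp.le_one m) (hq.1 m) (hq.le_one m)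
  have hjensen := sum_negMulLog_le (fun m => |p m - q m|) (fun m => abs_nonneg _)
  rw [sum_add_distrib] at hterm
  rw [hl1]
  linarith

lemma abs_sum_mul_sub_sum_mul_le {p q f : M → ℝ} {L : ℝ} (hp : IsPMF p) (hq : IsPMF q)
    (hf0 : ∀ m, 0 ≤ f m) (hfL : ∀ m, f m ≤ L) :
    |∑ m, p m * f m - ∑ m, q m * f m| ≤ tvDist p q * L := by
  have hcenter : ∑ m, p m * f m - ∑ m, q m * f m = ∑ m, (p m - q m) * (f m - L / 2) := by
    simp only [mul_sub, sub_mul, sum_sub_distrib, ← sum_mul, hp.2, hq.2]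
    ring
  have hosc : ∀ m, |f m - L / 2| ≤ L / 2 := fun m =>
    abs_le.2 ⟨by linarith [hf0 m], by linarith [hfL m]⟩
  calc |∑ m, p m * f m - ∑ m, q m * f m|
      ≤ ∑ m, |p m - q m| * (L / 2) := by
        rw [hcenter]
        refine (abs_sum_le_sum_abs _ _).trans (sum_le_sum fun m _ => ?_)
        rw [abs_mul]
        exact mul_le_mul_of_nonneg_left (hosc m) (abs_nonneg _)
    _ = tvDist p q * L := by
        rw [tvDist, ← sum_mul]
        ring

end Entropy

section Kernel

variable {B M : Type*} [Fintype B] [Fintype M]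

noncomputable def outputPMF (β : B → ℝ) (κ : B → M → ℝ) (m : M) : ℝ :=
  ∑ b, β b * κ b m

lemma IsPMF.outputPMF {β : B → ℝ} {κ : B → M → ℝ} (hβ : IsPMF β) (hκ : ∀ b, IsPMF (κ b)) :
    IsPMF (outputPMF β κ) := by
  refine ⟨fun m => sum_nonneg fun b _ => mul_nonneg (hβ.1 b) ((hκ b).1 m), ?_⟩
  simp only [_root_.outputPMF]
  rw [sum_comm]
  simp [← mul_sum, (hκ _).2, hβ.2]

lemma tvDist_outputPMF_le (β₁ β₂ : B → ℝ) {κ : B → M → ℝ} (hκ : ∀ b, IsPMF (κ b)) :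
    tvDist (outputPMF β₁ κ) (outputPMF β₂ κ) ≤ tvDist β₁ β₂ := by
  refine div_le_div_of_nonneg_right ?_ zero_le_two
  calc ∑ m, |outputPMF β₁ κ m - outputPMF β₂ κ m|
      ≤ ∑ m, ∑ b, |β₁ b - β₂ b| * κ b m := sum_le_sum fun m _ => by
        simp only [_root_.outputPMF, ← sum_sub_distrib, ← sub_mul]
        refine (abs_sum_le_sum_abs _ _).trans_eq (sum_congr rfl fun b _ => ?_)
        rw [abs_mul, abs_of_nonneg ((hκ b).1 m)]
    _ = ∑ b, |β₁ b - β₂ b| := by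
        rw [sum_comm]
        simp [← mul_sum, (hκ _).2]

lemma miPMF_eq_entropy_sub {β : B → ℝ} {κ : B → M → ℝ} (hβ : IsPMF β) (hκ : ∀ b, IsPMF (κ b)) :
    miPMF (fun bm : B × M => β bm.1 * κ bm.1 bm.2)
      = entropy (outputPMF β κ) - ∑ b, β b * entropy (κ b) := by
  have hterm : ∀ b m, β b * κ b m *
        log (β b * κ b m / ((∑ m', β b * κ b m') * outputPMF β κ m))
      = β b * (κ b m * log (κ b m)) - β b * κ b m * log (outputPMF β κ m) := by
    intro b m
    rcases (hβ.1 b).eq_or_lt with hb | hb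
    · simp [← hb]
    rcases ((hκ b).1 m).eq_or_lt with hk | hk
    · simp [← hk]
    have hout : 0 < outputPMF β κ m := (mul_pos hb hk).trans_le <|
      single_le_sum (f := fun b => β b * κ b m)
        (fun b _ => mul_nonneg (hβ.1 b) ((hκ b).1 m)) (mem_univ b)
    rw [← mul_sum, (hκ b).2, mul_one, mul_div_mul_left _ _ hb.ne',
      log_div hk.ne' hout.ne']
    ring
  calc miPMF (fun bm : B × M => β bm.1 * κ bm.1 bm.2)
      = ∑ b, ∑ m, (β b * (κ b m * log (κ b m)) - β b * κ b m * log (outputPMF β κ m)) :=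
        sum_congr rfl fun b _ => sum_congr rfl fun m _ => hterm b m
    _ = entropy (outputPMF β κ) - ∑ b, β b * entropy (κ b) := by
        simp only [sum_sub_distrib, entropy, negMulLog, neg_mul, sum_neg_distrib, mul_neg,
          mul_sum]
        rw [sum_comm (f := fun b m => β b * κ b m * log (outputPMF β κ m))]
        simp only [← sum_mul, _root_.outputPMF]
        ring

lemma miPMF_eq_zero_of_card_le_one {β : B → ℝ} {κ : B → M → ℝ} (hβ : IsPMF β)
    (hκ : ∀ b, IsPMF (κ b)) (hM : Fintype.card M ≤ 1) :
    miPMF (fun bm : B × M => β bm.1 * κ bm.1 bm.2) = 0 := by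
  simp [miPMF_eq_entropy_sub hβ hκ, entropy_eq_zero_of_card_le_one (hβ.outputPMF hκ) hM,
    entropy_eq_zero_of_card_le_one (hκ _) hM]

lemma abs_entropy_outputPMF_sub_le {β₁ β₂ : B → ℝ} {κ : B → M → ℝ} {δ : ℝ} (hβ₁ : IsPMF β₁)
    (hβ₂ : IsPMF β₂) (hκ : ∀ b, IsPMF (κ b)) (hM : 2 ≤ Fintype.card M) (hδ1 : δ ≤ 1)
    (htv : tvDist β₁ β₂ ≤ δ) :
    |entropy (outputPMF β₁ κ) - entropy (outputPMF β₂ κ)|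
      ≤ 2 * δ * (log (Fintype.card M) + 1) + negMulLog (2 * δ) := by
  have hout : 2 * tvDist (outputPMF β₁ κ) (outputPMF β₂ κ) ≤ 2 * δ := by
    linarith [tvDist_outputPMF_le β₁ β₂ hκ]
  have h2δ : 2 * δ ≤ exp (log (Fintype.card M)) := by
    have : (2 : ℝ) ≤ Fintype.card M := by exact_mod_cast hM
    rw [exp_log (by positivity)]
    linarith
  have hδ0 : 0 ≤ 2 * δ := by linarith [tvDist_nonneg β₁ β₂]
  exact (abs_entropy_sub_le (hβ₁.outputPMF hκ) (hβ₂.outputPMF hκ)).trans <|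
    monotoneOn_mul_add_negMulLog _ ⟨mul_nonneg zero_le_two (tvDist_nonneg _ _), hout.trans h2δ⟩
      ⟨hδ0, h2δ⟩ hout

lemma abs_sum_mul_entropy_sub_le {β₁ β₂ : B → ℝ} {κ : B → M → ℝ} {δ : ℝ} (hβ₁ : IsPMF β₁)
    (hβ₂ : IsPMF β₂) (hκ : ∀ b, IsPMF (κ b)) (htv : tvDist β₁ β₂ ≤ δ) :
    |∑ b, β₁ b * entropy (κ b) - ∑ b, β₂ b * entropy (κ b)| ≤ δ * log (Fintype.card M) :=
  (abs_sum_mul_sub_sum_mul_le hβ₁ hβ₂ (fun b => entropy_nonneg (hκ b))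
    (fun b => entropy_le_log_card (hκ b))).trans
    (mul_le_mul_of_nonneg_right htv (log_natCast_nonneg _))

end Kernel

lemma two_mul_log_add_negMulLog_le {n δ : ℝ} (hn : 2 ≤ n) (hδ0 : 0 < δ) (hδ1 : δ ≤ 1) :
    2 * δ * (log n + 1) + negMulLog (2 * δ) + δ * log n ≤ 4 * δ * log (n / δ) := by
  have hlogn : log 2 ≤ log n := log_le_log two_pos hn
  have hlogδ : log δ ≤ 0 := log_nonpos hδ0.le hδ1
  have hlog2 := log_two_gt_d9
  rw [negMulLog, log_mul two_ne_zero hδ0.ne', log_div (by linarith) hδ0.ne']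
  nlinarith [mul_le_mul_of_nonneg_left hlogn hδ0.le, mul_nonpos_of_nonneg_of_nonpos hδ0.le hlogδ]

/-- If `B₁, B₂` are random variables (pmfs `β₁, β₂` on a finite `B`) with
`d_TV(B₁,B₂) ≤ δ`, and `A : B → M` is a randomized map (a Markov kernel `κ` into a finite `M`)
applied with the same randomness mechanism to both, then
`|I(A(B₁);B₁) − I(A(B₂);B₂)| ≤ 4δ·log(|M|/δ)`. -/
theorem mi_diff_le_of_tv {B Mc : Type*} [Fintype B] [Fintype Mc]
    (β₁ β₂ : B → ℝ) (hβ₁ : IsPMF β₁) (hβ₂ : IsPMF β₂)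
    (κ : B → Mc → ℝ) (hκ : ∀ b, IsPMF (κ b))
    (δ : ℝ) (hδ : δ ∈ Set.Ioo (0:ℝ) 1) (htv : tvDist β₁ β₂ ≤ δ) :
    |miPMF (fun bm : B × Mc => β₁ bm.1 * κ bm.1 bm.2)
      - miPMF (fun bm : B × Mc => β₂ bm.1 * κ bm.1 bm.2)|
      ≤ 4 * δ * Real.log ((Fintype.card Mc : ℝ) / δ) := by
  obtain ⟨hδ0, hδ1⟩ := hδ
  rcases le_or_gt (Fintype.card Mc) 1 with hcard | hcard
  · rw [miPMF_eq_zero_of_card_le_one hβ₁ hκ hcard, miPMF_eq_zero_of_card_le_one hβ₂ hκ hcard,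
      sub_self, abs_zero]
    have hlog : 0 ≤ log ((Fintype.card Mc : ℝ) / δ) := by
      rcases Nat.le_one_iff_eq_zero_or_eq_one.1 hcard with h | h
      · simp [h]
      · simpa [h] using log_nonneg (one_le_inv_iff₀.2 ⟨hδ0, hδ1.le⟩)
    positivity
  rw [miPMF_eq_entropy_sub hβ₁ hκ, miPMF_eq_entropy_sub hβ₂ hκ, sub_sub_sub_comm]
  calc _ ≤ |entropy (outputPMF β₁ κ) - entropy (outputPMF β₂ κ)|
        + |∑ b, β₁ b * entropy (κ b) - ∑ b, β₂ b * entropy (κ b)| := abs_sub _ _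
    _ ≤ 2 * δ * (log (Fintype.card Mc) + 1) + negMulLog (2 * δ)
        + δ * log (Fintype.card Mc) :=
      add_le_add (abs_entropy_outputPMF_sub_le hβ₁ hβ₂ hκ hcard hδ1.le htv)
        (abs_sum_mul_entropy_sub_le hβ₁ hβ₂ hκ htv)
    _ ≤ 4 * δ * log ((Fintype.card Mc : ℝ) / δ) :=
      two_mul_log_add_negMulLog_le (by exact_mod_cast hcard) hδ0 hδ1.le
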